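/- arXiv:0710.3232 — 3 statements merged into one kernel-verified Lean document; each statement's English description precedes it below -/
import Mathlib

section
/- Let V be an n-dimensional vector space over a field F and G ≤ GL(V) a finite group. If ω₁,...,ω_m are differential 1-forms in F[V] ⊗ V* that are linearly independent over the invariant ring F[V]^G, then they are linearly independent over the rational function field F(V); in particular m ≤ n. -/
open MvPolynomial

abbrev GLn (F : Type*) [Field F] (n : ℕ) := (Fin n → F) ≃ₗ[F] (Fin n → F)

variable {F : Type*} [Field F] {n : ℕ}

/-- Matrix of the contragredient action of `g` on the coordinate functions:
`g · z_i = ∑ j (actMat g i j) z_j`. -/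
noncomputable def actMat (g : GLn F n) : Matrix (Fin n) (Fin n) F :=
  Matrix.of fun i j => g.symm (Pi.single j 1) i

/-- Action of `g ∈ GL(V)` on polynomials `F[V]` (contragredient action). -/
noncomputable def polyAct (g : GLn F n) : MvPolynomial (Fin n) F →ₐ[F] MvPolynomial (Fin n) F :=
  aeval fun i => ∑ j, C (actMat g i j) * X j

/-- The degree-one polynomial corresponding to a linear form on `V`. -/
noncomputable def linToPoly (z : (Fin n → F) →ₗ[F] F) : MvPolynomial (Fin n) F :=
  ∑ j, C (z (Pi.single j 1)) * X j

/-- The invariant ring `F[V]^G` as a subalgebra of `F[V]`. -/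
noncomputable def invSub (G : Subgroup (GLn F n)) : Subalgebra F (MvPolynomial (Fin n) F) where
  carrier := {f | ∀ g ∈ G, polyAct g f = f}
  add_mem' := fun {a b} ha hb g hg => by rw [map_add, ha g hg, hb g hg]
  mul_mem' := fun {a b} ha hb g hg => by rw [map_mul, ha g hg, hb g hg]
  algebraMap_mem' := fun r g hg => (polyAct g).commutes r

/-- Action of `g` on a differential 1-form `ω = ∑ i (w i) dz_i`; the result is the
coefficient vector of `g · ω`. -/
noncomputable def oneFormAct (g : GLn F n) (w : Fin n → MvPolynomial (Fin n) F) :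
    Fin n → MvPolynomial (Fin n) F :=
  fun j => ∑ i, polyAct g (w i) * C (actMat g i j)

/-- The coefficient of `dz_J` in `g · dz_I` (a minor determinant of `actMat g`). -/
noncomputable def minorDet (g : GLn F n) (I J : Finset (Fin n)) : F :=
  if h : J.card = I.card then
    Matrix.det (Matrix.of fun a b : Fin I.card =>
      actMat g (I.orderIsoOfFin rfl a) (J.orderIsoOfFin h b))
  else 0

/-- Action of `g` on a differential form `μ = ∑_I u_I dz_I`, given by its coefficient
function `u : Finset (Fin n) → F[V]`. -/
noncomputable def formAct (g : GLn F n) (u : Finset (Fin n) → MvPolynomial (Fin n) F) :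
    Finset (Fin n) → MvPolynomial (Fin n) F :=
  fun J => ∑ I : Finset (Fin n), polyAct g (u I) * C (minorDet g I J)

/-- The sign arising when wedging `dz_I ∧ dz_J` into `dz_(I ∪ J)` for disjoint `I`, `J`. -/
def wsign (I J : Finset (Fin n)) : ℤ :=
  (-1) ^ ((I ×ˢ J).filter fun p => p.2 < p.1).card

/-- Wedge product of differential forms in terms of coefficient functions. -/
noncomputable def wedgeF (u v : Finset (Fin n) → MvPolynomial (Fin n) F) :
    Finset (Fin n) → MvPolynomial (Fin n) F :=
  fun K => ∑ I ∈ K.powerset, wsign I (K \ I) • (u I * v (K \ I))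

/-- The constant 0-form `1`. -/
noncomputable def unitForm : Finset (Fin n) → MvPolynomial (Fin n) F :=
  fun S => if S = ∅ then 1 else 0

/-- Iterated wedge product of a list of forms. -/
noncomputable def iterWedge (L : List (Finset (Fin n) → MvPolynomial (Fin n) F)) :
    Finset (Fin n) → MvPolynomial (Fin n) F :=
  L.foldr wedgeF unitForm

/-- A 1-form, viewed as a differential form via its coefficient function. -/
noncomputable def oneToForm (w : Fin n → MvPolynomial (Fin n) F) :
    Finset (Fin n) → MvPolynomial (Fin n) F :=
  fun S => if h : S.card = 1 then w (S.min' (Finset.card_pos.mp (by omega))) else 0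

/-- The fixed space of `g` in `V`. -/
noncomputable def fixedSpace (g : GLn F n) : Submodule F (Fin n → F) :=
  LinearMap.ker (g.toLinearMap - LinearMap.id)

/-- A reflection: an element of finite order whose fixed space is a hyperplane. -/
def IsReflection (g : GLn F n) : Prop :=
  IsOfFinOrder g ∧ Module.finrank F (fixedSpace g) = n - 1

/-- A transvection: a (necessarily nondiagonalizable) reflection of determinant one. -/
def IsTransvection (g : GLn F n) : Prop :=
  IsReflection g ∧ LinearMap.det g.toLinearMap = 1 ∧ g ≠ 1

/-- The pointwise stabilizer `G_H` of a subspace `H` in `G`. -/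
def pointStab (G : Subgroup (GLn F n)) (H : Submodule F (Fin n → F)) : Subgroup (GLn F n) where
  carrier := {g | g ∈ G ∧ ∀ v ∈ H, g v = v}
  one_mem' := ⟨G.one_mem, fun v _ => rfl⟩
  mul_mem' := fun {a b} ha hb => ⟨G.mul_mem ha.1 hb.1, fun v hv => by
    show a (b v) = v
    rw [hb.2 v hv, ha.2 v hv]⟩
  inv_mem' := fun {a} ha => ⟨G.inv_mem ha.1, fun v hv => by
    show a.symm v = v
    conv_lhs => rw [← ha.2 v hv]
    exact a.symm_apply_apply v⟩

/-- `K_H`: the subgroup of `G_H` of elements of determinant one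
(the transvections in `G_H` together with the identity). -/
noncomputable def KH (G : Subgroup (GLn F n)) (H : Submodule F (Fin n → F)) :
    Subgroup (GLn F n) :=
  pointStab G H ⊓ MonoidHom.ker LinearEquiv.det

/-- `e_H = |G_H : K_H|`. -/
noncomputable def eH (G : Subgroup (GLn F n)) (H : Submodule F (Fin n → F)) : ℕ :=
  ((KH G H).subgroupOf (pointStab G H)).index

/-- The transvection root space of `G_H`: the span of the root vectors of the
transvections in `G_H` (the root vector of `t` spans the range of `t - 1`). -/
noncomputable def trvSpace (G : Subgroup (GLn F n)) (H : Submodule F (Fin n → F)) :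
    Submodule F (Fin n → F) :=
  ⨆ g ∈ {g : GLn F n | g ∈ pointStab G H ∧ IsTransvection g},
    LinearMap.range (g.toLinearMap - LinearMap.id)

/-- `b_H`: the dimension of the transvection root space of `G_H`. -/
noncomputable def bH (G : Subgroup (GLn F n)) (H : Submodule F (Fin n → F)) : ℕ :=
  Module.finrank F (trvSpace G H)

/-! A nontrivial `F(V)`-linear relation among `G`-invariant 1-forms is carried by every `g ∈ G`
to another relation. Normalising a relation of minimal support to have some coefficient `1` and
subtracting its `g`-translate therefore shows that its coefficients lie in `F(V)^G`. Multiplying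
by the norm `∏ g, g • q` of a common denominator `q` turns it into a nontrivial relation with
coefficients in `F[V]^G`. The bound `m ≤ n` is `dim F(V)^n = n`. -/

local notation "F[V]" => MvPolynomial (Fin n) F
local notation "F(V)" => FractionRing (MvPolynomial (Fin n) F)

theorem Submodule.exists_ne_zero_forall_smul_eq {Γ K ι : Type*} [Monoid Γ] [DivisionRing K]
    [MulSemiringAction Γ K] [Fintype ι] (R : Submodule K (ι → K))
    (hR : ∀ g : Γ, ∀ c ∈ R, g • c ∈ R) (hne : R ≠ ⊥) :
    ∃ c ∈ R, c ≠ 0 ∧ ∀ g : Γ, g • c = c := by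
  classical
  obtain ⟨c, hcR, hc0⟩ := Submodule.exists_mem_ne_zero_of_ne_bot hne
  induction hs : Finset.univ.filter (c · ≠ 0) using Finset.strongInduction generalizing c with
  | H s ih =>
    obtain ⟨i₀, hi₀⟩ := Function.ne_iff.mp hc0
    set c' := (c i₀)⁻¹ • c
    have hc'R : c' ∈ R := R.smul_mem _ hcR
    have hc'i₀ : c' i₀ = 1 := inv_mul_cancel₀ hi₀
    by_cases hfix : ∀ g : Γ, g • c' = c'
    · exact ⟨c', hc'R, fun h => by simpa [hc'i₀] using congrFun h i₀, hfix⟩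
    obtain ⟨g, hg⟩ := not_forall.mp hfix
    have hsupp : Finset.univ.filter fun i => (g • c' - c') i ≠ 0 ⊆ s.erase i₀ := by
      intro i hi
      simp only [Finset.mem_filter, Finset.mem_univ, true_and, Pi.sub_apply, Pi.smul_apply] at hi
      rw [← hs, Finset.mem_erase, Finset.mem_filter]
      refine ⟨fun h => hi (by simp [h, hc'i₀]), Finset.mem_univ i, fun h => hi ?_⟩
      simp [c', h]
    exact ih _ ((hsupp.trans_ssubset (Finset.erase_ssubset (by simpa [← hs] using hi₀))))
      _ (R.sub_mem (hR g c' hc'R) hc'R) (sub_ne_zero.mpr hg) rfl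

section FixedRelations

variable {Γ A K : Type*} [Group Γ] [Finite Γ] [CommRing A] [IsDomain A] [MulSemiringAction Γ A]
  [Field K] [Algebra A K] [IsFractionRing A K] [MulSemiringAction Γ K] [SMulDistribClass Γ A K]

theorem IsFractionRing.exists_fixed_integer_multiples {ι : Type*} [Fintype ι] (c : ι → K)
    (hc : ∀ g : Γ, g • c = c) :
    ∃ a : A, a ≠ 0 ∧ ∃ p : ι → A, (∀ g : Γ, g • p = p) ∧
      ∀ i, algebraMap A K (p i) = algebraMap A K a * c i := by
  have := Fintype.ofFinite Γ
  obtain ⟨q, hq⟩ := IsLocalization.exist_integer_multiples (nonZeroDivisors A) Finset.univ c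
  choose b hb using fun i => hq i (Finset.mem_univ i)
  -- the invariant denominator is the norm of a common denominator `q`
  obtain ⟨r, hr⟩ : (q : A) ∣ ∏ h : Γ, h • (q : A) := by
    simpa using Finset.dvd_prod_of_mem (fun h : Γ => h • (q : A)) (Finset.mem_univ 1)
  have hp : ∀ i, algebraMap A K (b i * r) = algebraMap A K (∏ h : Γ, h • (q : A)) * c i := by
    intro i
    rw [hr, map_mul, map_mul, hb i, Algebra.smul_def]
    ring
  refine ⟨_, Finset.prod_ne_zero_iff.mpr fun h _ => (smul_eq_zero_iff_eq h).not.mpr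
    (nonZeroDivisors.ne_zero q.2), fun i => b i * r, ?_, hp⟩
  intro g
  ext i
  apply IsFractionRing.injective A K
  rw [Pi.smul_apply, algebraMap.smul', hp, smul_mul', ← algebraMap.smul',
    Finset.smul_prod_perm, ← Pi.smul_apply, hc]

theorem linearIndependent_algebraMap_of_no_fixed_relation {ι κ : Type*} [Fintype ι]
    (ω : ι → κ → A)
    (hstable : ∀ g : Γ, ∀ c : ι → K, ∑ i, c i • (algebraMap A K ∘ ω i) = 0 →
      ∑ i, (g • c i) • (algebraMap A K ∘ ω i) = 0)
    (hindep : ∀ p : ι → A, (∀ g : Γ, g • p = p) → ∑ i, p i • ω i = 0 → p = 0) :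
    LinearIndependent K fun i => algebraMap A K ∘ ω i := by
  set R := LinearMap.ker (Fintype.linearCombination K fun i => algebraMap A K ∘ ω i)
  have mem_R : ∀ c, c ∈ R ↔ ∑ i, c i • (algebraMap A K ∘ ω i) = 0 := fun c => by
    simp [R, Fintype.linearCombination_apply]
  have hR : ∀ g : Γ, ∀ c ∈ R, g • c ∈ R := fun g c hc =>
    (mem_R _).mpr (hstable g c ((mem_R c).mp hc))
  by_contra hdep
  obtain ⟨c₀, hc₀, i₀, hi₀⟩ := Fintype.not_linearIndependent_iff.mp hdep
  obtain ⟨c, hcR, hc0, hcfix⟩ := R.exists_ne_zero_forall_smul_eq hR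
    ((Submodule.ne_bot_iff R).mpr
      ⟨c₀, (mem_R c₀).mpr hc₀, Function.ne_iff.mpr ⟨i₀, hi₀⟩⟩)
  obtain ⟨a, ha0, p, hpfix, hp⟩ :=
    IsFractionRing.exists_fixed_integer_multiples (A := A) c hcfix
  have hprel : ∑ i, p i • ω i = 0 := by
    ext j
    apply IsFractionRing.injective A K
    have hcj := congrFun ((mem_R c).mp hcR) j
    simp only [Finset.sum_apply, Pi.smul_apply, smul_eq_mul, Function.comp_apply] at hcj
    simp [map_sum, hp, mul_assoc, ← Finset.mul_sum, hcj]
  apply hc0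
  ext i
  have := congrArg (algebraMap A K) (congrFun (hindep p hpfix hprel) i)
  rw [hp, Pi.zero_apply, map_zero, mul_eq_zero] at this
  exact this.resolve_left ((map_ne_zero_iff _ (IsFractionRing.injective A K)).mpr ha0)

end FixedRelations

theorem actMat_eq_toMatrix' (g : GLn F n) :
    actMat g = LinearMap.toMatrix' (g.symm : (Fin n → F) →ₗ[F] Fin n → F) := by
  ext i j
  rw [LinearMap.toMatrix'_apply]
  rfl

theorem actMat_one : actMat (1 : GLn F n) = 1 := by
  rw [actMat_eq_toMatrix']
  exact LinearMap.toMatrix'_id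

theorem actMat_mul (g h : GLn F n) : actMat (g * h) = actMat h * actMat g := by
  simp only [actMat_eq_toMatrix', ← LinearMap.toMatrix'_comp]
  rfl

theorem polyAct_X (g : GLn F n) (i : Fin n) :
    polyAct g (X i) = ∑ j, C (actMat g i j) * X j :=
  aeval_X _ i

theorem polyAct_one : polyAct (1 : GLn F n) = AlgHom.id F _ := by
  apply algHom_ext
  intro i
  simp [polyAct_X, actMat_one, Matrix.one_apply]

theorem polyAct_mul (g h : GLn F n) : polyAct (g * h) = (polyAct g).comp (polyAct h) := by
  apply algHom_ext
  intro i
  simp only [AlgHom.comp_apply, polyAct_X, map_sum, map_mul, actMat_mul, Matrix.mul_apply,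
    algHom_C, algebraMap_eq, Finset.mul_sum, Finset.sum_mul]
  rw [Finset.sum_comm]
  simp only [mul_assoc]

noncomputable def polyAut : GLn F n →* (F[V] ≃ₐ[F] F[V]) where
  toFun g := AlgEquiv.ofAlgHom (polyAct g) (polyAct g⁻¹)
    (by rw [← polyAct_mul, mul_inv_cancel, polyAct_one])
    (by rw [← polyAct_mul, inv_mul_cancel, polyAct_one])
  map_one' := AlgEquiv.ext fun p => by simp [polyAct_one]
  map_mul' g h := AlgEquiv.ext fun p => by simp [polyAct_mul]

section InvariantForms

variable (G : Subgroup (GLn F n))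

noncomputable instance polyMulSemiringAction : MulSemiringAction G F[V] :=
  MulSemiringAction.compHom _ (polyAut.comp G.subtype)

noncomputable instance fracMulSemiringAction : MulSemiringAction G F(V) :=
  IsFractionRing.mulSemiringAction G F[V] _

theorem smul_eq_polyAct (g : G) (p : F[V]) : g • p = polyAct (g : GLn F n) p :=
  rfl

theorem mem_invSub_iff_forall_smul_eq (f : F[V]) :
    f ∈ invSub G ↔ ∀ g : G, g • f = f :=
  ⟨fun hf g => hf g g.2, fun hf g hg => hf ⟨g, hg⟩⟩

theorem sum_smul_smul_eq_zero_of_oneFormAct_eq {ι : Type*} [Fintype ι]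
    (ω : ι → Fin n → F[V]) (g : G) (hω : ∀ i, oneFormAct (g : GLn F n) (ω i) = ω i) (c : ι → F(V))
    (hc : ∑ i, c i • (algebraMap F[V] F(V) ∘ ω i) = 0) :
    ∑ i, (g • c i) • (algebraMap F[V] F(V) ∘ ω i) = 0 := by
  have hgc :
      ∀ j, ∑ i, (g • c i) * algebraMap F[V] F(V) (polyAct (g : GLn F n) (ω i j)) = 0 := by
    intro j
    have := congrArg (g • ·) (congrFun hc j)
    simpa [Finset.smul_sum, smul_mul', ← algebraMap.smul', smul_eq_polyAct] using this
  ext j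
  calc (∑ i, (g • c i) • (algebraMap F[V] F(V) ∘ ω i)) j
      = ∑ i, (g • c i) * algebraMap F[V] F(V) (oneFormAct (g : GLn F n) (ω i) j) := by
        simp [hω]
    _ = ∑ k, (∑ i, (g • c i) * algebraMap F[V] F(V) (polyAct (g : GLn F n) (ω i k))) *
          algebraMap F[V] F(V) (C (actMat g k j)) := by
        simp only [oneFormAct, map_sum, map_mul, Finset.mul_sum, Finset.sum_mul, mul_assoc]
        exact Finset.sum_comm
    _ = 0 := by simp [hgc]

end InvariantForms

/-- G-invariant 1-forms that are linearly independent over the invariant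
ring `F[V]^G` are linearly independent over the rational function field `F(V)`;
in particular there are at most `n` of them. -/
theorem stmt0 {F : Type*} [Field F] {n m : ℕ} (G : Subgroup (GLn F n)) [Finite G]
    (ω : Fin m → (Fin n → MvPolynomial (Fin n) F))
    (hωinv : ∀ i, ∀ g ∈ G, oneFormAct g (ω i) = ω i)
    (hindep : ∀ c : Fin m → MvPolynomial (Fin n) F, (∀ i, c i ∈ invSub G) →
      (∀ j, ∑ i, c i * ω i j = 0) → ∀ i, c i = 0) :
    LinearIndependent (FractionRing (MvPolynomial (Fin n) F))
      (fun i : Fin m => fun j : Fin n =>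
        algebraMap (MvPolynomial (Fin n) F) (FractionRing (MvPolynomial (Fin n) F)) (ω i j)) ∧
    m ≤ n := by
  have hli : LinearIndependent (FractionRing (MvPolynomial (Fin n) F))
      fun i => algebraMap _ (FractionRing (MvPolynomial (Fin n) F)) ∘ ω i :=
    linearIndependent_algebraMap_of_no_fixed_relation (Γ := G) ω
      (fun g => sum_smul_smul_eq_zero_of_oneFormAct_eq G ω g fun i => hωinv i g g.2)
      fun p hp hrel => funext fun i =>
        hindep p (fun i => (mem_invSub_iff_forall_smul_eq G _).mpr fun g => congrFun (hp g) i)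
          (fun j => by simpa using congrFun hrel j) i
  exact ⟨hli, by simpa using hli.fintype_card_le_finrank⟩
end

section
/- In the setting of the preceding lemma, if moreover μ is invariant under all of G_H (which is generated by K_H together with a diagonalizable reflection s_H of order e_H whose non-trivial eigenvector is vₙ), then the coefficient u_J is divisible by l_H^{e_H}. -/
open MvPolynomial

variable {F : Type*} [Field F] {n : ℕ}

lemma xpow_dvd_of_support {N : ℕ} {F : Type*} [Field F] (i : Fin N) (k : ℕ)
    (p : MvPolynomial (Fin N) F) (h : ∀ m ∈ p.support, k ≤ m i) : X i ^ k ∣ p := by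
  classical
  conv_rhs => rw [p.as_sum]
  apply Finset.dvd_sum
  intro m hm
  rw [X_pow_eq_monomial, monomial_dvd_monomial]
  exact ⟨Or.inr (Finsupp.single_le_iff.mpr (h m hm)), one_dvd _⟩

lemma sub_aeval_zero_dvd {N : ℕ} {F : Type*} [Field F] (i : Fin N)
    (p : MvPolynomial (Fin N) F) :
    (X i : MvPolynomial (Fin N) F) ∣
      p - aeval (fun k => if k = i then 0 else X k : Fin N → MvPolynomial (Fin N) F) p := by
  classical
  induction p using MvPolynomial.induction_on with
  | C a => simp
  | add p q hp hq =>
      have := dvd_add hp hq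
      rw [map_add]
      convert this using 1
      ring
  | mul_X p j hp =>
      rw [map_mul, aeval_X]
      by_cases hj : j = i
      · subst hj
        simp only [eq_self_iff_true, if_true, mul_zero, sub_zero]
        exact dvd_mul_left _ _
      · rw [if_neg hj]
        have : p * X j - (aeval fun k => if k = i then 0 else X k) p * X j
            = (p - (aeval fun k => if k = i then 0 else X k) p) * X j := by ring
        rw [this]
        exact hp.mul_right _

lemma coeff_aeval_scale {N : ℕ} {F : Type*} [Field F] (i : Fin N) (a : F)
    (p : MvPolynomial (Fin N) F) (m : Fin N →₀ ℕ) :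
    coeff m (aeval (fun k => if k = i then C a * X i else X k :
        Fin N → MvPolynomial (Fin N) F) p) = a ^ (m i) * coeff m p := by
  classical
  induction p using MvPolynomial.induction_on generalizing m with
  | C r =>
      rw [aeval_C, algebraMap_eq, coeff_C]
      by_cases h0 : 0 = m
      · rw [if_pos h0, ← h0]
        simp
      · rw [if_neg h0, mul_zero]
  | add p q hp hq => rw [map_add, coeff_add, coeff_add, hp, hq]; ring
  | mul_X p j hp =>
      rw [map_mul, aeval_X]
      by_cases hj : j = i
      · subst hj
        rw [if_pos rfl]
        have : (aeval fun k => if k = j then C a * X j else X k) p * (C a * X j)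
            = (C a * (aeval fun k => if k = j then C a * X j else X k) p) * X j := by ring
        rw [this, coeff_mul_X', coeff_mul_X']
        by_cases hm : j ∈ m.support
        · rw [if_pos hm, if_pos hm, coeff_C_mul, hp]
          have hmj : m j ≠ 0 := Finsupp.mem_support_iff.mp hm
          rw [Finsupp.tsub_apply, Finsupp.single_eq_same]
          rw [← mul_assoc, ← pow_succ']
          congr 2
          omega
        · rw [if_neg hm, if_neg hm, mul_zero]
      · rw [if_neg hj, coeff_mul_X', coeff_mul_X']
        by_cases hm : j ∈ m.support
        · rw [if_pos hm, if_pos hm, hp]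
          congr 2
          rw [Finsupp.tsub_apply, Finsupp.single_apply, if_neg hj]
          simp
        · rw [if_neg hm, if_neg hm, mul_zero]

section Step1
variable {F : Type*} [Field F] {n : ℕ}

-- minor lemma: columns all "delta" (no last column), rows I
lemma minor_deltaCols (g : GLn F (n + 1))
    (hg : ∀ p q, q ≠ Fin.last n → actMat g p q = if p = q then 1 else 0)
    (S I : Finset (Fin (n + 1))) (hLS : Fin.last n ∉ S) :
    minorDet g I S = if I = S then 1 else 0 := by
  classical
  unfold minorDet
  by_cases h : S.card = I.card
  · rw [dif_pos h]
    by_cases hIS : I = S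
    · subst hIS
      rw [if_pos rfl]
      have : (Matrix.of fun a b : Fin I.card =>
          actMat g (I.orderIsoOfFin rfl a) (I.orderIsoOfFin h b)) = 1 := by
        ext a b
        rw [Matrix.of_apply, hg _ _ (by
          intro hc
          exact hLS (hc ▸ (I.orderIsoOfFin h b).2))]
        by_cases hab : a = b
        · subst hab; simp
        · rw [if_neg (by
            intro hc
            exact hab ((I.orderIsoOfFin rfl).injective (by
              apply Subtype.ext
              simpa using hc)))]
          simp [Matrix.one_apply_ne hab]
      rw [this, Matrix.det_one]
    · rw [if_neg hIS]
      have hns : ¬ S ⊆ I := by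
        intro hsub
        exact hIS (Finset.eq_of_subset_of_card_le hsub (le_of_eq h.symm)).symm
      obtain ⟨q, hqS, hqI⟩ := Finset.not_subset.mp hns
      apply Matrix.det_eq_zero_of_column_eq_zero ((S.orderIsoOfFin h).symm ⟨q, hqS⟩)
      intro a
      rw [Matrix.of_apply]
      have hco : ((S.orderIsoOfFin h) ((S.orderIsoOfFin h).symm ⟨q, hqS⟩) : Fin (n+1)) = q := by
        rw [OrderIso.apply_symm_apply]
      rw [hco, hg _ _ (fun hc => hLS (by rw [← hc]; exact hqS))]
      rw [if_neg (fun hc => hqI (by rw [← hc]; exact (I.orderIsoOfFin rfl a).2))]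
  · rw [dif_neg h, if_neg (fun hc => h (by rw [hc]))]

end Step1

section Step2
variable {F : Type*} [Field F] {n : ℕ}

variable (g : GLn F (n + 1)) (i : Fin (n + 1)) (J : Finset (Fin (n + 1)))

lemma minorKK
    (hAt : ∀ p q, actMat g p q =
      (if p = q then 1 else 0) - (if q = Fin.last n ∧ p = i then 1 else 0))
    (hiJ : i ∈ J) (hJL : Fin.last n ∉ J) :
    minorDet g (insert (Fin.last n) (J.erase i)) (insert (Fin.last n) (J.erase i)) = 1 := by
  classical
  set K := insert (Fin.last n) (J.erase i) with hK
  have hiK : i ∉ K := by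
    simp only [hK, Finset.mem_insert]
    push_neg
    exact ⟨fun hc => hJL (hc ▸ hiJ), Finset.notMem_erase i J⟩
  unfold minorDet
  rw [dif_pos rfl]
  have : (Matrix.of fun a b : Fin K.card =>
      actMat g (K.orderIsoOfFin rfl a) (K.orderIsoOfFin rfl b)) = 1 := by
    ext a b
    rw [Matrix.of_apply, hAt]
    have h2 : ¬(((K.orderIsoOfFin rfl b : Fin (n+1)) = Fin.last n) ∧
        ((K.orderIsoOfFin rfl a : Fin (n+1)) = i)) :=
      fun hc => hiK (by rw [← hc.2]; exact (K.orderIsoOfFin rfl a).2)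
    rw [if_neg h2, sub_zero]
    by_cases hab : a = b
    · subst hab; simp
    · rw [if_neg (fun hc => hab ((K.orderIsoOfFin rfl).injective (Subtype.ext hc))),
        Matrix.one_apply_ne hab]
  rw [this, Matrix.det_one]

lemma minorOther
    (hAt : ∀ p q, actMat g p q =
      (if p = q then 1 else 0) - (if q = Fin.last n ∧ p = i then 1 else 0))
    (hiJ : i ∈ J) (hJL : Fin.last n ∉ J) :
    ∀ I, I ≠ J → I ≠ insert (Fin.last n) (J.erase i) → minorDet g I (insert (Fin.last n) (J.erase i)) = 0 := by
  classical
  intro I hIJ hIK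
  set K := insert (Fin.last n) (J.erase i) with hK
  have hLK : Fin.last n ∈ K := Finset.mem_insert_self _ _
  have hKe : K.erase (Fin.last n) = J.erase i :=
    Finset.erase_insert (fun hc => hJL (Finset.mem_of_mem_erase hc))
  unfold minorDet
  by_cases h : K.card = I.card
  swap
  · rw [dif_neg h]
  rw [dif_pos h]
  by_cases hsub : K.erase (Fin.last n) ⊆ I
  · -- column at position of L is zero
    have hLI : Fin.last n ∉ I := by
      intro hLI
      have : K ⊆ I := by
        rw [← Finset.insert_erase hLK]
        exact Finset.insert_subset hLI hsub
      exact hIK (Finset.eq_of_subset_of_card_le this (le_of_eq h.symm)).symm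
    have hiI : i ∉ I := by
      intro hiI
      have hJI : J ⊆ I := by
        rw [← Finset.insert_erase hiJ]
        exact Finset.insert_subset hiI (hKe ▸ hsub)
      have hcard : J.card = K.card := by
        rw [hK, Finset.card_insert_of_notMem (fun hc => hJL (Finset.mem_of_mem_erase hc)),
          Finset.card_erase_of_mem hiJ]
        have : 0 < J.card := Finset.card_pos.mpr ⟨i, hiJ⟩
        omega
      exact hIJ (Finset.eq_of_subset_of_card_le hJI (le_of_eq (hcard.trans h).symm)).symm
    apply Matrix.det_eq_zero_of_column_eq_zero ((K.orderIsoOfFin h).symm ⟨Fin.last n, hLK⟩)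
    intro a
    rw [Matrix.of_apply]
    have hco : ((K.orderIsoOfFin h) ((K.orderIsoOfFin h).symm ⟨Fin.last n, hLK⟩) : Fin (n+1))
        = Fin.last n := by rw [OrderIso.apply_symm_apply]
    rw [hco, hAt]
    have h2 : ¬(((I.orderIsoOfFin rfl a : Fin (n+1)) = Fin.last n)) :=
      fun hc => hLI (by rw [← hc]; exact (I.orderIsoOfFin rfl a).2)
    have h3 : ¬((Fin.last n = Fin.last n) ∧ ((I.orderIsoOfFin rfl a : Fin (n+1)) = i)) :=
      fun hc => hiI (by rw [← hc.2]; exact (I.orderIsoOfFin rfl a).2)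
    rw [if_neg h2, if_neg h3, sub_zero]
  · obtain ⟨q, hqK, hqI⟩ := Finset.not_subset.mp hsub
    have hqL : q ≠ Fin.last n := Finset.ne_of_mem_erase hqK
    have hqK' : q ∈ K := Finset.mem_of_mem_erase hqK
    apply Matrix.det_eq_zero_of_column_eq_zero ((K.orderIsoOfFin h).symm ⟨q, hqK'⟩)
    intro a
    rw [Matrix.of_apply]
    have hco : ((K.orderIsoOfFin h) ((K.orderIsoOfFin h).symm ⟨q, hqK'⟩) : Fin (n+1)) = q := by
      rw [OrderIso.apply_symm_apply]
    rw [hco, hAt]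
    have h2 : ¬(((I.orderIsoOfFin rfl a : Fin (n+1)) = q)) :=
      fun hc => hqI (by rw [← hc]; exact (I.orderIsoOfFin rfl a).2)
    have h3 : ¬((q = Fin.last n) ∧ ((I.orderIsoOfFin rfl a : Fin (n+1)) = i)) :=
      fun hc => hqL hc.1
    rw [if_neg h2, if_neg h3, sub_zero]

end Step2

section Step3
variable {F : Type*} [Field F] {n : ℕ}

lemma minorJK_ne (g : GLn F (n + 1)) (i : Fin (n + 1)) (J : Finset (Fin (n + 1)))
    (hAt : ∀ p q, actMat g p q =
      (if p = q then 1 else 0) - (if q = Fin.last n ∧ p = i then 1 else 0))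
    (hiJ : i ∈ J) (hJL : Fin.last n ∉ J) :
    minorDet g J (insert (Fin.last n) (J.erase i)) ≠ 0 := by
  classical
  set K := insert (Fin.last n) (J.erase i) with hK
  have hKe : K.erase (Fin.last n) = J.erase i :=
    Finset.erase_insert (fun hc => hJL (Finset.mem_of_mem_erase hc))
  have h : K.card = J.card := by
    rw [hK, Finset.card_insert_of_notMem (fun hc => hJL (Finset.mem_of_mem_erase hc)),
      Finset.card_erase_of_mem hiJ]
    have : 0 < J.card := Finset.card_pos.mpr ⟨i, hiJ⟩
    omega
  unfold minorDet
  rw [dif_pos h]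
  -- target row element for each column
  have hxmem : ∀ b : Fin J.card,
      (if (K.orderIsoOfFin h b : Fin (n+1)) = Fin.last n then i
        else (K.orderIsoOfFin h b : Fin (n+1))) ∈ J := by
    intro b
    by_cases hb : (K.orderIsoOfFin h b : Fin (n+1)) = Fin.last n
    · rw [if_pos hb]; exact hiJ
    · rw [if_neg hb]
      have : (K.orderIsoOfFin h b : Fin (n+1)) ∈ K.erase (Fin.last n) :=
        Finset.mem_erase.mpr ⟨hb, (K.orderIsoOfFin h b).2⟩
      rw [hKe] at this
      exact Finset.mem_of_mem_erase this
  set x : Fin J.card → Fin (n + 1) := fun b =>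
    if (K.orderIsoOfFin h b : Fin (n+1)) = Fin.last n then i
      else (K.orderIsoOfFin h b : Fin (n+1)) with hx
  set σ : Fin J.card → Fin J.card :=
    fun b => (J.orderIsoOfFin rfl).symm ⟨x b, hxmem b⟩ with hσ
  have hJσ : ∀ b, (J.orderIsoOfFin rfl (σ b) : Fin (n+1)) = x b := by
    intro b
    rw [hσ, OrderIso.apply_symm_apply]
  set d : Fin J.card → F := fun b =>
    if (K.orderIsoOfFin h b : Fin (n+1)) = Fin.last n then -1 else 1 with hd
  -- entries
  have hentry : ∀ a b, actMat g (J.orderIsoOfFin rfl a) (K.orderIsoOfFin h b)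
      = if a = σ b then d b else 0 := by
    intro a b
    rw [hAt]
    by_cases hb : (K.orderIsoOfFin h b : Fin (n+1)) = Fin.last n
    · have h1 : ¬((J.orderIsoOfFin rfl a : Fin (n+1)) = (K.orderIsoOfFin h b : Fin (n+1))) := by
        rw [hb]; exact fun hc => hJL (by rw [← hc]; exact (J.orderIsoOfFin rfl a).2)
      rw [if_neg h1, zero_sub, hd]
      simp only [if_pos hb]
      have hxb : x b = i := by rw [hx]; simp only [if_pos hb]
      by_cases ha : (J.orderIsoOfFin rfl a : Fin (n+1)) = i
      · rw [if_pos ⟨hb, ha⟩, if_pos]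
        exact ((J.orderIsoOfFin rfl).injective (Subtype.ext (by rw [hJσ b, hxb, ha])) : a = σ b)
      · rw [if_neg (fun hc => ha hc.2), if_neg, neg_zero]
        intro hc
        apply ha
        rw [hc, hJσ b, hxb]
    · have h2 : ¬(((K.orderIsoOfFin h b : Fin (n+1)) = Fin.last n) ∧
          ((J.orderIsoOfFin rfl a : Fin (n+1)) = i)) := fun hc => hb hc.1
      rw [if_neg h2, sub_zero, hd]
      simp only [if_neg hb]
      have hxb : x b = (K.orderIsoOfFin h b : Fin (n+1)) := by rw [hx]; simp only [if_neg hb]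
      by_cases ha : (J.orderIsoOfFin rfl a : Fin (n+1)) = (K.orderIsoOfFin h b : Fin (n+1))
      · rw [if_pos ha, if_pos]
        exact ((J.orderIsoOfFin rfl).injective (Subtype.ext (by rw [hJσ b, hxb, ha])) : a = σ b)
      · rw [if_neg ha, if_neg]
        intro hc
        apply ha
        rw [hc, hJσ b, hxb]
  -- σ is injective
  have hinj : Function.Injective σ := by
    intro b b' hbb'
    have hxx : x b = x b' := by
      have := congrArg (fun z => (J.orderIsoOfFin rfl z : Fin (n+1))) hbb'
      simpa only [hJσ] using this
    by_cases hb : (K.orderIsoOfFin h b : Fin (n+1)) = Fin.last n <;>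
      by_cases hb' : (K.orderIsoOfFin h b' : Fin (n+1)) = Fin.last n
    · exact (K.orderIsoOfFin h).injective (Subtype.ext (hb.trans hb'.symm))
    · exfalso
      rw [hx] at hxx
      simp only [if_pos hb, if_neg hb'] at hxx
      have : (K.orderIsoOfFin h b' : Fin (n+1)) ∈ J.erase i := by
        rw [← hKe]
        exact Finset.mem_erase.mpr ⟨hb', (K.orderIsoOfFin h b').2⟩
      exact (Finset.ne_of_mem_erase this) hxx.symm
    · exfalso
      rw [hx] at hxx
      simp only [if_pos hb', if_neg hb] at hxx
      have : (K.orderIsoOfFin h b : Fin (n+1)) ∈ J.erase i := by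
        rw [← hKe]
        exact Finset.mem_erase.mpr ⟨hb, (K.orderIsoOfFin h b).2⟩
      exact (Finset.ne_of_mem_erase this) hxx
    · apply (K.orderIsoOfFin h).injective
      apply Subtype.ext
      rw [hx] at hxx
      simp only [if_neg hb, if_neg hb'] at hxx
      exact hxx
  set σe : Equiv.Perm (Fin J.card) :=
    Equiv.ofBijective σ (Finite.injective_iff_bijective.mp hinj) with hσe
  have hM : (Matrix.of fun a b : Fin J.card =>
      actMat g (J.orderIsoOfFin rfl a) (K.orderIsoOfFin h b))
      = (Matrix.diagonal d).submatrix σe.symm id := by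
    ext a b
    rw [Matrix.of_apply, hentry a b, Matrix.submatrix_apply, id]
    by_cases hab : a = σ b
    · have : σe.symm a = b := by
        rw [hab]
        exact σe.symm_apply_apply b
      rw [if_pos hab, this, Matrix.diagonal_apply_eq]
    · have hne : σe.symm a ≠ b := fun hc => hab (by rw [← hc]; exact (σe.apply_symm_apply a).symm)
      rw [if_neg hab, Matrix.diagonal_apply_ne _ hne]
  rw [hM, Matrix.det_permute, Matrix.det_diagonal]
  apply mul_ne_zero
  · rcases Int.units_eq_one_or (Equiv.Perm.sign σe.symm) with hs | hs <;>
      rw [hs] <;> simp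
  · rw [Finset.prod_ne_zero_iff]
    intro b _
    show (if (K.orderIsoOfFin h b : Fin (n+1)) = Fin.last n then (-1 : F) else 1) ≠ 0
    by_cases hb : (K.orderIsoOfFin h b : Fin (n+1)) = Fin.last n
    · rw [if_pos hb]; exact neg_ne_zero.mpr one_ne_zero
    · rw [if_neg hb]; exact one_ne_zero

end Step3

/-- in the setting of the previous lemma, if `μ` is invariant under all of
`G_H` (generated by `K_H` and a diagonalizable reflection `s_H` of order `e_H` scaling
the last coordinate by `λ`), then `u_J` is divisible by `l_H^{e_H}`. -/
theorem stmt6 {F : Type*} [Field F] (h2 : ringChar F ≠ 2) {n : ℕ} (b : ℕ) (hb : b ≤ n)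
    (GH : Subgroup (GLn F (n + 1)))
    (hfix : ∀ g ∈ GH, ∀ v : Fin (n + 1) → F, v (Fin.last n) = 0 → g v = v)
    (hrefl : ∀ g ∈ GH, g ≠ 1 → IsReflection g)
    (htr : ∀ i : Fin (n + 1), (i : ℕ) < b →
      ∃ t ∈ GH, ∀ v : Fin (n + 1) → F, t v = v + v (Fin.last n) • (Pi.single i 1 : Fin (n + 1) → F))
    (s : GLn F (n + 1)) (hs : s ∈ GH) (lam : F) (e : ℕ) (he : orderOf lam = e)
    (hsact : ∀ v : Fin (n + 1) → F,
      s v = Function.update v (Fin.last n) (lam * v (Fin.last n)))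
    (hgen : GH = Subgroup.closure ({s} ∪ {t : GLn F (n + 1) | t ∈ GH ∧ IsTransvection t}))
    (u : Finset (Fin (n + 1)) → MvPolynomial (Fin (n + 1)) F)
    (hinv : ∀ g ∈ GH, formAct g u = u)
    (J : Finset (Fin (n + 1))) (hJb : ∃ i ∈ J, (i : ℕ) < b) (hJn : Fin.last n ∉ J) :
    X (Fin.last n) ^ e ∣ u J := by
  classical
  obtain ⟨i, hiJ, hib⟩ := hJb
  obtain ⟨t, ht, htv⟩ := htr i hib
  have hiL : i ≠ Fin.last n := by
    intro hc
    rw [hc] at hib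
    simp only [Fin.val_last] at hib
    omega
  -- inverse of t on basis vectors
  have tsymm : ∀ j, t.symm (Pi.single j (1:F)) =
      Pi.single j 1 - (if j = Fin.last n then Pi.single i 1 else 0) := by
    intro j
    rw [LinearEquiv.symm_apply_eq, htv]
    by_cases hj : j = Fin.last n
    · subst hj
      rw [if_pos rfl]
      funext xv
      simp only [Pi.add_apply, Pi.smul_apply, Pi.sub_apply, Pi.single_apply, smul_eq_mul]
      split_ifs <;>
        first
          | exact absurd ((by assumption : Fin.last n = i).symm) hiL
          | ring
    · rw [if_neg hj, sub_zero]
      funext xv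
      simp only [Pi.add_apply, Pi.smul_apply, Pi.single_apply, smul_eq_mul]
      rw [if_neg (fun hc : Fin.last n = j => hj hc.symm)]
      ring
  have hAt : ∀ p q, actMat t p q =
      (if p = q then (1:F) else 0) - (if q = Fin.last n ∧ p = i then 1 else 0) := by
    intro p q
    show t.symm (Pi.single q 1) p = _
    rw [tsymm q, Pi.sub_apply]
    congr 1
    · rw [Pi.single_apply]
    · by_cases hq : q = Fin.last n
      · rw [if_pos hq, Pi.single_apply]
        by_cases hp : p = i
        · rw [if_pos hp, if_pos ⟨hq, hp⟩]
        · rw [if_neg hp, if_neg (fun hc => hp hc.2)]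
      · rw [if_neg hq, if_neg (fun hc => hq hc.1)]
        rfl
  -- lam is nonzero
  have hlam : lam ≠ 0 := by
    intro h0
    have h1 := hsact (Pi.single (Fin.last n) 1 : Fin (n+1) → F)
    have h22 : s (Pi.single (Fin.last n) (1:F)) = 0 := by
      rw [h1, h0]
      funext xv
      by_cases hx : xv = Fin.last n
      · subst hx; simp
      · simp [Function.update_of_ne hx, Pi.single_eq_of_ne hx]
    have h3 : (Pi.single (Fin.last n) (1:F)) = 0 :=
      s.injective (by rw [h22, map_zero])
    have := congrFun h3 (Fin.last n)
    simp at this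
  have ssymm : ∀ j, s.symm (Pi.single j (1:F)) =
      if j = Fin.last n then lam⁻¹ • (Pi.single (Fin.last n) 1 : Fin (n+1) → F) else Pi.single j 1 := by
    intro j
    rw [LinearEquiv.symm_apply_eq]
    by_cases hj : j = Fin.last n
    · subst hj
      rw [if_pos rfl, hsact]
      funext xv
      by_cases hx : xv = Fin.last n
      · subst hx
        simp [Function.update_self, mul_inv_cancel₀ hlam]
      · simp [Function.update_of_ne hx, Pi.single_eq_of_ne hx]
    · rw [if_neg hj, hsact]
      funext xv
      by_cases hx : xv = Fin.last n
      · subst hx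
        simp [Function.update_self, Pi.single_eq_of_ne (Ne.symm hj)]
      · simp [Function.update_of_ne hx]
  have hAs : ∀ p q, actMat s p q =
      if p = q then (if q = Fin.last n then lam⁻¹ else 1) else 0 := by
    intro p q
    show s.symm (Pi.single q 1) p = _
    rw [ssymm q]
    by_cases hq : q = Fin.last n
    · subst hq
      rw [if_pos rfl, Pi.smul_apply, Pi.single_apply, smul_eq_mul]
      by_cases hp : p = Fin.last n
      · rw [if_pos hp, if_pos hp, if_pos rfl, mul_one]
      · rw [if_neg hp, if_neg hp, mul_zero]
    · rw [if_neg hq, Pi.single_apply]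
      by_cases hp : p = q
      · rw [if_pos hp, if_pos hp, if_neg hq]
      · rw [if_neg hp, if_neg hp]
  -- polyAct of t and s as explicit substitutions
  have hψ : polyAct t = aeval (fun k => X k - (if k = i then X (Fin.last n) else 0) :
      Fin (n+1) → MvPolynomial (Fin (n+1)) F) := by
    unfold polyAct
    congr 1
    funext k
    have hterm : ∀ j : Fin (n+1), C (actMat t k j) * X j
        = (if k = j then X j else 0)
          - (if k = i then (if j = Fin.last n then X j else 0) else 0) := by
      intro j
      rw [hAt, map_sub, sub_mul]
      congr 1
      · by_cases h1 : k = j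
        · rw [if_pos h1, if_pos h1, C_1, one_mul]
        · rw [if_neg h1, if_neg h1, C_0, zero_mul]
      · by_cases hj2 : j = Fin.last n <;> by_cases h3 : k = i
        · rw [if_pos ⟨hj2, h3⟩, if_pos h3, if_pos hj2, C_1, one_mul]
        · rw [if_neg (fun hc => h3 hc.2), if_neg h3, C_0, zero_mul]
        · rw [if_neg (fun hc => hj2 hc.1), if_pos h3, if_neg hj2, C_0, zero_mul]
        · rw [if_neg (fun hc => h3 hc.2), if_neg h3, C_0, zero_mul]
    rw [Finset.sum_congr rfl (fun j _ => hterm j), Finset.sum_sub_distrib,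
      Finset.sum_ite_eq Finset.univ k (fun j => X j), if_pos (Finset.mem_univ k)]
    congr 1
    by_cases h3 : k = i
    · simp only [if_pos h3]
      rw [Finset.sum_ite_eq' Finset.univ (Fin.last n) (fun j => X j),
        if_pos (Finset.mem_univ _)]
    · simp only [if_neg h3, Finset.sum_const_zero]
  have hφ : polyAct s = aeval (fun k =>
      if k = Fin.last n then C lam⁻¹ * X (Fin.last n) else X k :
      Fin (n+1) → MvPolynomial (Fin (n+1)) F) := by
    unfold polyAct
    congr 1
    funext k
    have hterm : ∀ j : Fin (n+1), C (actMat s k j) * X j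
        = if k = j then (if j = Fin.last n then C lam⁻¹ * X j else X j) else 0 := by
      intro j
      rw [hAs]
      by_cases h1 : k = j
      · rw [if_pos h1, if_pos h1]
        by_cases hj2 : j = Fin.last n
        · rw [if_pos hj2, if_pos hj2]
        · rw [if_neg hj2, if_neg hj2, C_1, one_mul]
      · rw [if_neg h1, if_neg h1, C_0, zero_mul]
    rw [Finset.sum_congr rfl (fun j _ => hterm j),
      Finset.sum_ite_eq Finset.univ k
        (fun j => if j = Fin.last n then C lam⁻¹ * X j else X j),
      if_pos (Finset.mem_univ k)]
    by_cases hk : k = Fin.last n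
    · rw [if_pos hk, if_pos hk, hk]
    · rw [if_neg hk, if_neg hk]
  -- delta-column property
  have hgt : ∀ p q, q ≠ Fin.last n → actMat t p q = if p = q then (1:F) else 0 := by
    intro p q hq
    rw [hAt]
    have h2 : ¬(q = Fin.last n ∧ p = i) := fun hc => hq hc.1
    rw [if_neg h2, sub_zero]
  have hgs : ∀ p q, q ≠ Fin.last n → actMat s p q = if p = q then (1:F) else 0 := by
    intro p q hq
    rw [hAs]
    by_cases h1 : p = q
    · rw [if_pos h1, if_pos h1, if_neg hq]
    · rw [if_neg h1, if_neg h1]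
  -- J-component invariance equations
  have hsumJt : polyAct t (u J) = u J := by
    have h0 := congrFun (hinv t ht) J
    simp only [formAct] at h0
    have hsum : (∑ I : Finset (Fin (n+1)), polyAct t (u I) * C (minorDet t I J))
        = polyAct t (u J) := by
      rw [Finset.sum_eq_single J]
      · rw [minor_deltaCols t hgt J J hJn, if_pos rfl, C_1, mul_one]
      · intro I _ hI
        rw [minor_deltaCols t hgt J I hJn, if_neg hI, C_0, mul_zero]
      · intro hcc
        exact absurd (Finset.mem_univ J) hcc
    rw [← hsum]
    exact h0
  have hsumJs : polyAct s (u J) = u J := by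
    have h0 := congrFun (hinv s hs) J
    simp only [formAct] at h0
    have hsum : (∑ I : Finset (Fin (n+1)), polyAct s (u I) * C (minorDet s I J))
        = polyAct s (u J) := by
      rw [Finset.sum_eq_single J]
      · rw [minor_deltaCols s hgs J J hJn, if_pos rfl, C_1, mul_one]
      · intro I _ hI
        rw [minor_deltaCols s hgs J I hJn, if_neg hI, C_0, mul_zero]
      · intro hcc
        exact absurd (Finset.mem_univ J) hcc
    rw [← hsum]
    exact h0
  -- K-component invariance equation
  set K : Finset (Fin (n+1)) := insert (Fin.last n) (J.erase i) with hKdef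
  have hJK : J ≠ K := fun hc => hJn (by rw [hc]; exact Finset.mem_insert_self _ _)
  have hsum2 : polyAct t (u J) * C (minorDet t J K) + polyAct t (u K) * C (minorDet t K K)
      = u K := by
    have h0 := congrFun (hinv t ht) K
    simp only [formAct] at h0
    have hpair : (∑ I : Finset (Fin (n+1)), polyAct t (u I) * C (minorDet t I K))
        = polyAct t (u J) * C (minorDet t J K) + polyAct t (u K) * C (minorDet t K K) := by
      have hstep : (∑ I : Finset (Fin (n+1)), polyAct t (u I) * C (minorDet t I K))
          = ∑ I ∈ ({J, K} : Finset (Finset (Fin (n+1)))), polyAct t (u I) * C (minorDet t I K) := by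
        refine (Finset.sum_subset (Finset.subset_univ _) ?_).symm
        intro I _ hI
        have hIJ : I ≠ J := fun hc => hI (by rw [hc]; exact Finset.mem_insert_self _ _)
        have hIK : I ≠ K := fun hc =>
          hI (by rw [hc]; exact Finset.mem_insert_of_mem (Finset.mem_singleton_self _))
        rw [minorOther t i J hAt hiJ hJn I hIJ hIK, C_0, mul_zero]
      rw [hstep]
      exact Finset.sum_pair hJK
    rw [← hpair]
    exact h0
  rw [minorKK t i J hAt hiJ hJn, C_1, mul_one, hsumJt] at hsum2
  set c : F := minorDet t J K with hcdef
  have hc0 : c ≠ 0 := minorJK_ne t i J hAt hiJ hJn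
  -- the substitution setting X_last to zero
  set θ : MvPolynomial (Fin (n+1)) F →ₐ[F] MvPolynomial (Fin (n+1)) F :=
    aeval (fun k => if k = Fin.last n then 0 else X k) with hθdef
  have hθψ : θ.comp (polyAct t) = θ := by
    apply MvPolynomial.algHom_ext
    intro k
    rw [AlgHom.comp_apply, hψ, aeval_X]
    by_cases hk : k = i
    · rw [if_pos hk, map_sub]
      have hz : θ (X (Fin.last n)) = 0 := by rw [hθdef, aeval_X, if_pos rfl]
      rw [hz, sub_zero]
    · rw [if_neg hk, sub_zero]
  have hdvd1 : X (Fin.last n) ∣ u K - polyAct t (u K) := by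
    have e1 := sub_aeval_zero_dvd (Fin.last n) (u K)
    have e2 := sub_aeval_zero_dvd (Fin.last n) (polyAct t (u K))
    have e3 : θ (polyAct t (u K)) = θ (u K) := by
      rw [← AlgHom.comp_apply, hθψ]
    have hre : u K - polyAct t (u K)
        = (u K - θ (u K)) - (polyAct t (u K) - θ (polyAct t (u K))) := by
      rw [e3]; ring
    rw [hre]
    exact dvd_sub e1 e2
  have hujc : u J * C c = u K - polyAct t (u K) := eq_sub_of_add_eq hsum2
  have hdvd2 : X (Fin.last n) ∣ u J := by
    have hrw : u J = (u J * C c) * C c⁻¹ := by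
      rw [mul_assoc, ← map_mul, mul_inv_cancel₀ hc0, C_1, mul_one]
    rw [hrw, hujc]
    exact hdvd1.mul_right _
  -- support conditions
  have hsupp1 : ∀ m ∈ (u J).support, m (Fin.last n) ≠ 0 := by
    intro m hm hm0
    obtain ⟨q, hq⟩ := hdvd2
    have hcne : coeff m (u J) ≠ 0 := mem_support_iff.mp hm
    rw [hq, mul_comm, coeff_mul_X'] at hcne
    rw [if_neg (fun hcc => (Finsupp.mem_support_iff.mp hcc) hm0)] at hcne
    exact hcne rfl
  have hsupp2 : ∀ m ∈ (u J).support, e ≤ m (Fin.last n) := by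
    intro m hm
    have hcne : coeff m (u J) ≠ 0 := mem_support_iff.mp hm
    have hscale := coeff_aeval_scale (Fin.last n) lam⁻¹ (u J) m
    rw [← hφ, hsumJs] at hscale
    have hpow : lam⁻¹ ^ (m (Fin.last n)) = 1 := by
      have hz : (lam⁻¹ ^ (m (Fin.last n)) - 1) * coeff m (u J) = 0 := by
        rw [sub_mul, one_mul, ← hscale, sub_self]
      rcases mul_eq_zero.mp hz with hz1 | hz2
      · exact sub_eq_zero.mp hz1
      · exact absurd hz2 hcne
    rw [inv_pow, inv_eq_one] at hpow
    have hdvde : e ∣ m (Fin.last n) := he ▸ orderOf_dvd_of_pow_eq_one hpow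
    exact Nat.le_of_dvd (Nat.pos_of_ne_zero (hsupp1 m hm)) hdvde
  exact xpow_dvd_of_support (Fin.last n) e (u J) hsupp2
end

section
/- With f_k := ∏_{(α₁,...,α_{k−1}) ∈ F_q^{k−1}} (z_k + α_{k−1}z_{k−1} + ... + α₁z₁) in F_q[z₁,...,zₙ], the exterior derivative df_k is divisible by ∏_{i<k} f_i^{q−2}; more precisely, z_i^{q−2} divides ∂f_k/∂z_l for all i < k and all l, and ∂f_k/∂z_k equals ∏_{i<k} f_i^{q−1} up to a nonzero scalar. -/
open MvPolynomial

variable {F : Type*} [Field F] {n : ℕ}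

/-- The basic invariant `f_k` of the unipotent group (indices 0-based). -/
noncomputable def unipBasic (F : Type*) [Field F] [Fintype F] (n : ℕ) (k : Fin n) :
    MvPolynomial (Fin n) F :=
  ∏ α : Fin (k : ℕ) → F,
    (X k + ∑ i : Fin (k : ℕ), C (α i) * X (Fin.castLE k.isLt.le i))

/-!
Write `f_k = P_k(z_k)` with `P_m(t) = ∏_{ℓ ∈ span(z_0, …, z_{m-1})} (t + ℓ)`. By Frobenius,
`P_m` is `𝔽_q`-linear in `t`, and `∏_{c ∈ 𝔽_q} (a + c b) = a^q - b^{q-1} a` then gives the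
recursion `P_{m+1}(t) = P_m(t)^q - f_m^{q-1} P_m(t)`. For any derivation `D`, `D(a^q) = 0` and
`q - 1 = -1`, so `D P_{m+1}(t) = f_m^{q-2} (D f_m · P_m(t) - f_m · D P_m(t))`: by induction
`∏_{i<m} f_i^{q-2}` divides `D P_m(t)`, and if `D` kills `z_0, …, z_{m-1}` the same recursion
gives `D P_m(t) = (-1)^m ∏_{i<m} f_i^{q-1} · D t`. Finally `z_i ∣ f_i` (the factor `ℓ = 0`).
-/

theorem FiniteField.prod_X_sub_C_eq_X_pow_card_sub_X (K : Type*) [Field K] [Fintype K] :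
    ∏ c : K, (Polynomial.X - Polynomial.C c) =
      (Polynomial.X ^ Fintype.card K - Polynomial.X : Polynomial K) := by
  have hmonic : (Polynomial.X ^ Fintype.card K - Polynomial.X : Polynomial K).Monic :=
    Polynomial.monic_X_pow_sub (by rw [Polynomial.degree_X]; exact_mod_cast Fintype.one_lt_card)
  have h := Polynomial.prod_multiset_X_sub_C_of_monic_of_roots_card_eq hmonic (by
    rw [FiniteField.roots_X_pow_card_sub_X,
      FiniteField.X_pow_card_sub_X_natDegree_eq K Fintype.one_lt_card]; rfl)
  rwa [FiniteField.roots_X_pow_card_sub_X] at h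

section

variable {K R : Type*} [Field K] [Fintype K] [CommRing R] [Algebra K R]

local notation "q" => Fintype.card K

theorem FiniteField.prod_add_algebraMap (x : R) :
    ∏ c : K, (x + algebraMap K R c) = x ^ q - x := by
  have h := congrArg (Polynomial.aeval x) (FiniteField.prod_X_sub_C_eq_X_pow_card_sub_X K)
  simp only [map_prod, map_sub, map_pow, Polynomial.aeval_X, Polynomial.aeval_C] at h
  rw [← h, ← Equiv.prod_comp (Equiv.neg K)]
  simp [sub_eq_add_neg]

theorem FiniteField.prod_add_smul_of_isUnit (a : R) {b : R} (hb : IsUnit b) :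
    ∏ c : K, (a + c • b) = a ^ q - b ^ (q - 1) * a := by
  obtain ⟨⟨b, w, -, hwb⟩, rfl⟩ := hb
  have hq : q = q - 1 + 1 := (Nat.sub_add_cancel Fintype.card_pos).symm
  have hfactor : ∀ c : K, a + c • b = (a * w + algebraMap K R c) * b := by
    intro c
    rw [add_mul, mul_assoc, hwb, mul_one, Algebra.smul_def]
  have h₁ : (a * w) ^ q * b ^ q = a ^ q := by rw [← mul_pow, mul_assoc, hwb, mul_one]
  have h₂ : a * w * b ^ q = b ^ (q - 1) * a := by
    rw [hq, pow_succ', mul_assoc, ← mul_assoc w, hwb, one_mul, Nat.add_sub_cancel, mul_comm]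
  simp only [hfactor, Finset.prod_mul_distrib, Finset.prod_const, Finset.card_univ,
    FiniteField.prod_add_algebraMap, sub_mul, h₁, h₂]

theorem FiniteField.prod_add_smul [IsDomain R] (a b : R) :
    ∏ c : K, (a + c • b) = a ^ q - b ^ (q - 1) * a := by
  rcases eq_or_ne b 0 with rfl | hb
  · simp [zero_pow (Nat.sub_ne_zero_of_lt Fintype.one_lt_card)]
  · apply IsFractionRing.injective R (FractionRing R)
    have hb' : IsUnit (algebraMap R (FractionRing R) b) :=
      (IsFractionRing.to_map_ne_zero_of_mem_nonZeroDivisors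
        (mem_nonZeroDivisors_of_ne_zero hb)).isUnit
    have := FiniteField.prod_add_smul_of_isUnit (K := K) (algebraMap R (FractionRing R) a) hb'
    simp only [Algebra.smul_def] at this ⊢
    simpa only [map_prod, map_add, map_sub, map_mul, map_pow,
      ← IsScalarTower.algebraMap_apply] using this

theorem FiniteField.add_pow_card [Nontrivial R] (x y : R) : (x + y) ^ q = x ^ q + y ^ q := by
  obtain ⟨p, _⟩ := CharP.exists K
  obtain ⟨e, hp, hq⟩ := FiniteField.card K p
  have := Fact.mk hp
  have := charP_of_injective_algebraMap' K (A := R) p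
  rw [hq, add_pow_char_pow]

variable (K) in
def spanProd {m : ℕ} (v : Fin m → R) (t : R) : R := ∏ α : Fin m → K, (t + ∑ i, α i • v i)

variable (K) in
def spanProdPrefix {m : ℕ} (v : Fin m → R) (i : Fin m) : R :=
  spanProd K (Fin.take i i.isLt.le v) (v i)

theorem spanProd_fin_zero (v : Fin 0 → R) (t : R) : spanProd K v t = t := by
  simp [spanProd]

theorem dvd_spanProd {m : ℕ} (v : Fin m → R) (t : R) : t ∣ spanProd K v t := by
  simpa [spanProd] using Finset.dvd_prod_of_mem (fun α : Fin m → K => t + ∑ i, α i • v i)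
    (Finset.mem_univ 0)

theorem spanProd_succ {m : ℕ} (v : Fin (m + 1) → R) (t : R) :
    spanProd K v t = ∏ c : K, spanProd K (Fin.init v) (t + c • v (Fin.last m)) := by
  rw [spanProd, ← (Fin.snocEquiv fun _ => K).prod_comp, Fintype.prod_prod_type]
  refine Finset.prod_congr rfl fun c _ => Finset.prod_congr rfl fun α _ => ?_
  simp only [Fin.snocEquiv, Equiv.coe_fn_mk, Fin.sum_univ_castSucc, Fin.snoc_castSucc,
    Fin.snoc_last, Fin.init]
  ring

theorem spanProd_succ_eq_of_add_smul [IsDomain R] {m : ℕ} (v : Fin (m + 1) → R)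
    (h : ∀ (t s : R) (c : K), spanProd K (Fin.init v) (t + c • s) =
      spanProd K (Fin.init v) t + c • spanProd K (Fin.init v) s) (t : R) :
    spanProd K v t = spanProd K (Fin.init v) t ^ q -
      spanProd K (Fin.init v) (v (Fin.last m)) ^ (q - 1) * spanProd K (Fin.init v) t := by
  simp only [spanProd_succ, h, FiniteField.prod_add_smul]

theorem spanProd_add_smul [IsDomain R] {m : ℕ} (v : Fin m → R) (t s : R) (c : K) :
    spanProd K v (t + c • s) = spanProd K v t + c • spanProd K v s := by
  induction m generalizing t s c with
  | zero => simp only [spanProd_fin_zero]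
  | succ m ih =>
    simp only [spanProd_succ_eq_of_add_smul v (ih _), ih (Fin.init v)]
    rw [FiniteField.add_pow_card, smul_pow, FiniteField.pow_card]
    simp only [Algebra.smul_def]
    ring

theorem spanProd_succ_eq [IsDomain R] {m : ℕ} (v : Fin (m + 1) → R) (t : R) :
    spanProd K v t = spanProd K (Fin.init v) t ^ q -
      spanProd K (Fin.init v) (v (Fin.last m)) ^ (q - 1) * spanProd K (Fin.init v) t :=
  spanProd_succ_eq_of_add_smul v (spanProd_add_smul _) t

theorem spanProdPrefix_castSucc {m : ℕ} (v : Fin (m + 1) → R) (i : Fin m) :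
    spanProdPrefix K v i.castSucc = spanProdPrefix K (Fin.init v) i := rfl

theorem spanProdPrefix_last {m : ℕ} (v : Fin (m + 1) → R) :
    spanProdPrefix K v (Fin.last m) = spanProd K (Fin.init v) (v (Fin.last m)) := rfl

theorem Derivation.map_spanProd_succ [IsDomain R] (D : Derivation K R R) {m : ℕ}
    (v : Fin (m + 1) → R) (t : R) :
    D (spanProd K v t) = spanProdPrefix K v (Fin.last m) ^ (q - 2) *
      (D (spanProdPrefix K v (Fin.last m)) * spanProd K (Fin.init v) t -
        spanProdPrefix K v (Fin.last m) * D (spanProd K (Fin.init v) t)) := by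
  set T := spanProd K (Fin.init v) t
  set W := spanProdPrefix K v (Fin.last m)
  obtain ⟨r, hr⟩ : ∃ r, q = r + 2 := ⟨q - 2, by have := Fintype.one_lt_card (α := K); omega⟩
  have hq : ((r + 2 : ℕ) : R) = 0 := by
    rw [← hr, ← _root_.map_natCast (algebraMap K R), FiniteField.cast_card_eq_zero, map_zero]
  rw [spanProd_succ_eq, ← spanProdPrefix_last, map_sub, D.leibniz_pow, D.leibniz, D.leibniz_pow, hr]
  simp only [smul_eq_mul, nsmul_eq_mul, Nat.add_sub_cancel, Nat.add_one_sub_one]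
  push_cast at hq ⊢
  linear_combination (T ^ (r + 1) * D T - W ^ r * D W * T) * hq

theorem Derivation.prod_spanProdPrefix_pow_dvd [IsDomain R] (D : Derivation K R R) {m : ℕ}
    (v : Fin m → R) (t : R) : ∏ i, spanProdPrefix K v i ^ (q - 2) ∣ D (spanProd K v t) := by
  induction m generalizing t with
  | zero => simp
  | succ m ih =>
    obtain ⟨a, ha⟩ := ih (Fin.init v) t
    obtain ⟨b, hb⟩ := ih (Fin.init v) (v (Fin.last m))
    rw [D.map_spanProd_succ, spanProdPrefix_last, ha, hb, Fin.prod_univ_castSucc]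
    exact ⟨b * spanProd K (Fin.init v) t - spanProd K (Fin.init v) (v (Fin.last m)) * a, by
      simp only [spanProdPrefix_castSucc, spanProdPrefix_last]; ring⟩

theorem Derivation.map_spanProd_of_map_eq_zero [IsDomain R] (D : Derivation K R R) {m : ℕ}
    (v : Fin m → R) (hv : ∀ i, D (v i) = 0) (t : R) :
    D (spanProd K v t) = (-1) ^ m * (∏ i, spanProdPrefix K v i ^ (q - 1)) * D t := by
  induction m generalizing t with
  | zero => simp [spanProd_fin_zero]
  | succ m ih =>
    have hv' : ∀ i, D (Fin.init v i) = 0 := fun i => hv _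
    have hq : q - 1 = q - 2 + 1 := by have := Fintype.one_lt_card (α := K); omega
    rw [D.map_spanProd_succ, spanProdPrefix_last, ih _ hv', ih _ hv', hv, Fin.prod_univ_castSucc,
      hq]
    simp only [spanProdPrefix_castSucc, spanProdPrefix_last]
    ring

end

theorem Fin.prod_filter_lt_eq_prod_castLE {M : Type*} [CommMonoid M] {n : ℕ} (k : Fin n)
    (f : Fin n → M) :
    ∏ i ∈ Finset.univ.filter (· < k), f i = ∏ j : Fin k, f (Fin.castLE k.isLt.le j) := by
  have : Finset.univ.filter (· < k) = Finset.univ.map (Fin.castLEEmb k.isLt.le) := by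
    ext i
    simp only [Finset.mem_filter, Finset.mem_univ, true_and, Finset.mem_map, Fin.castLEEmb_apply]
    exact ⟨fun h => ⟨⟨i, h⟩, rfl⟩, by rintro ⟨j, rfl⟩; exact j.isLt⟩
  rw [this, Finset.prod_map]
  rfl

theorem unipBasic_eq_spanProdPrefix [Fintype F] (k : Fin n) :
    unipBasic F n k = spanProdPrefix F (X : Fin n → MvPolynomial (Fin n) F) k := by
  simp only [unipBasic, spanProdPrefix, spanProd, Fin.take_apply, smul_eq_C_mul]

theorem stmt14_general {F : Type*} [Field F] [Fintype F] {n : ℕ}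
    (k : Fin n) :
    (∀ i l : Fin n, i < k →
      (X i : MvPolynomial (Fin n) F) ^ (Fintype.card F - 2) ∣ pderiv l (unipBasic F n k)) ∧
    (∀ l : Fin n,
      (∏ i ∈ Finset.univ.filter (· < k), unipBasic F n i ^ (Fintype.card F - 2)) ∣
        pderiv l (unipBasic F n k)) ∧
    (∃ c : F, c ≠ 0 ∧ pderiv k (unipBasic F n k) =
      C c * ∏ i ∈ Finset.univ.filter (· < k), unipBasic F n i ^ (Fintype.card F - 1)) := by
  set v : Fin k → MvPolynomial (Fin n) F := Fin.take k k.isLt.le X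
  have hf : unipBasic F n k = spanProd F v (X k) := unipBasic_eq_spanProdPrefix k
  have hprod : ∀ e, ∏ i ∈ Finset.univ.filter (· < k), unipBasic F n i ^ e =
      ∏ j, spanProdPrefix F v j ^ e := fun e => by
    simp only [Fin.prod_filter_lt_eq_prod_castLE, unipBasic_eq_spanProdPrefix]
    rfl
  have hdvd : ∀ l, (∏ i ∈ Finset.univ.filter (· < k), unipBasic F n i ^ (Fintype.card F - 2)) ∣
      pderiv l (unipBasic F n k) := fun l => by
    rw [hprod, hf]
    exact (pderiv l).prod_spanProdPrefix_pow_dvd v _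
  refine ⟨fun i l hik => ?_, hdvd, (-1) ^ (k : ℕ), pow_ne_zero _ (neg_ne_zero.2 one_ne_zero), ?_⟩
  · have hXi : (X i : MvPolynomial (Fin n) F) ∣ unipBasic F n i := by
      rw [unipBasic_eq_spanProdPrefix]
      exact dvd_spanProd _ _
    have hi : i ∈ Finset.univ.filter (· < k) := Finset.mem_filter.2 ⟨Finset.mem_univ _, hik⟩
    exact (pow_dvd_pow_of_dvd hXi _).trans
      ((Finset.dvd_prod_of_mem (fun j => unipBasic F n j ^ (Fintype.card F - 2)) hi).trans (hdvd l))
  · have hv : ∀ j, pderiv k (v j) = 0 := fun j =>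
      pderiv_X_of_ne (Fin.ne_of_lt (show Fin.castLE k.isLt.le j < k from j.isLt))
    rw [hprod, hf, (pderiv k).map_spanProd_of_map_eq_zero v hv, pderiv_X_self, mul_one,
      map_pow, map_neg, map_one]

/-- `z_i^{q-2}` divides `∂f_k/∂z_l` for all `i < k` and all `l`, so
`∏_{i<k} f_i^{q-2}` divides `df_k`; moreover `∂f_k/∂z_k ≐ ∏_{i<k} f_i^{q-1}`. -/
theorem stmt14 {F : Type*} [Field F] [Fintype F] (hodd : ringChar F ≠ 2) {n : ℕ}
    (k : Fin n) :
    (∀ i l : Fin n, i < k →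
      (X i : MvPolynomial (Fin n) F) ^ (Fintype.card F - 2) ∣ pderiv l (unipBasic F n k)) ∧
    (∀ l : Fin n,
      (∏ i ∈ Finset.univ.filter (· < k), unipBasic F n i ^ (Fintype.card F - 2)) ∣
        pderiv l (unipBasic F n k)) ∧
    (∃ c : F, c ≠ 0 ∧ pderiv k (unipBasic F n k) =
      C c * ∏ i ∈ Finset.univ.filter (· < k), unipBasic F n i ^ (Fintype.card F - 1)) :=
  stmt14_general k
end
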